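/- arXiv:1408.5817 — 2 statements merged into one kernel-verified Lean document; each statement's English description precedes it below -/
import Mathlib

section
/- For all 1 ≤ k ≤ n and every element q of a commutative ring, q^{(n−k)(n−1)} · Σ_{(σ,S)∈𝔖^>_{n,n−k}} q^{maj((σ,S))} = Σ_{i=1}^{k} q^{C(n−k,2) + (n−k)(i−1)} · binom_q(n−i, n−k) · A_{n,n−i}(q), where C(m,2) = m(m−1)/2 and A_{n,j}(q) = Σ_{σ∈𝔖_n : des(σ)=j} q^{maj(σ)}. (This is the identity D^{maj}_{𝔖^>_{n,n−k}}(q) = Σ_{i=1}^{k} q^{C(n−k,2)−(n−k)(n−i)} binom_q(n−i,n−k) A_{n,n−i}(q) with denominators cleared.) -/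
open Finset

/-- One-line notation: `oneline σ i` is the value σ_i ∈ {1,…,n} at position i ∈ {1,…,n}. -/
def oneline {n : ℕ} (σ : Equiv.Perm (Fin n)) (i : ℕ) : ℕ :=
  if h : 1 ≤ i ∧ i ≤ n then (σ ⟨i - 1, by omega⟩ : ℕ) + 1 else 0

/-- The descent set Des(σ) = {i ∈ {1,…,n−1} : σ_i > σ_{i+1}}. -/
def DesSet {n : ℕ} (σ : Equiv.Perm (Fin n)) : Finset ℕ :=
  (Finset.Icc 1 (n - 1)).filter fun i => oneline σ (i + 1) < oneline σ i

/-- The ascent set Asc(σ) = {i ∈ {1,…,n−1} : σ_i < σ_{i+1}}. -/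
def AscSet {n : ℕ} (σ : Equiv.Perm (Fin n)) : Finset ℕ :=
  (Finset.Icc 1 (n - 1)).filter fun i => oneline σ i < oneline σ (i + 1)

/-- maj(σ) = Σ_{i ∈ Des(σ)} i. -/
def majNum {n : ℕ} (σ : Equiv.Perm (Fin n)) : ℕ := ∑ i ∈ DesSet σ, i

/-- des(σ) = |Des(σ)|. -/
def desNum {n : ℕ} (σ : Equiv.Perm (Fin n)) : ℕ := (DesSet σ).card

/-- inv(σ) = #{(i,j) : 1 ≤ i < j ≤ n, σ_i > σ_j}. -/
def invNum {n : ℕ} (σ : Equiv.Perm (Fin n)) : ℕ :=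
  ((Finset.Icc 1 n ×ˢ Finset.Icc 1 n).filter fun p =>
    p.1 < p.2 ∧ oneline σ p.2 < oneline σ p.1).card

/-- coinv(σ) = #{(i,j) : 1 ≤ i < j ≤ n, σ_i < σ_j}. -/
def coinvNum {n : ℕ} (σ : Equiv.Perm (Fin n)) : ℕ :=
  ((Finset.Icc 1 n ×ˢ Finset.Icc 1 n).filter fun p =>
    p.1 < p.2 ∧ oneline σ p.1 < oneline σ p.2).card

/-- inv^{□,j}(σ) = #{i : 1 ≤ i < j, σ_i > σ_j}, inversions ending at position j. -/
def invEnd {n : ℕ} (σ : Equiv.Perm (Fin n)) (j : ℕ) : ℕ :=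
  ((Finset.Icc 1 n).filter fun i => i < j ∧ oneline σ j < oneline σ i).card

/-- inv^{i,□}(σ) = #{j : i < j ≤ n, σ_i > σ_j}, inversions starting at position i. -/
def invStart {n : ℕ} (σ : Equiv.Perm (Fin n)) (i : ℕ) : ℕ :=
  ((Finset.Icc 1 n).filter fun j => i < j ∧ oneline σ j < oneline σ i).card

/-- [m]_q = 1 + q + ⋯ + q^{m−1}. -/
def qnum {R : Type*} [CommRing R] (q : R) (m : ℕ) : R := ∑ i ∈ Finset.range m, q ^ i

/-- [m]_q! = [1]_q [2]_q ⋯ [m]_q, with [0]_q! = 1. -/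
def qfact {R : Type*} [CommRing R] (q : R) (m : ℕ) : R := ∏ i ∈ Finset.range m, qnum q (i + 1)

/-- q-Stirling numbers: S_{0,0}(q)=1, S_{n,k}(q)=0 for k<0 or k>n, and
S_{n+1,k}(q) = S_{n,k−1}(q) + [k]_q S_{n,k}(q). -/
def qStirling {R : Type*} [CommRing R] (q : R) : ℕ → ℕ → R
  | 0, 0 => 1
  | 0, _ + 1 => 0
  | _ + 1, 0 => 0
  | n + 1, k + 1 => qStirling q n k + qnum q (k + 1) * qStirling q n (k + 1)

/-- The set of star-sets of size k inside a given finite set (e.g. the descent set). -/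
def starSets (D : Finset ℕ) (k : ℕ) : Finset (Finset ℕ) :=
  D.powerset.filter fun S => S.card = k

/-- inv((σ,S)) = inv(σ) − Σ_{i∈S} (1 + inv^{□,i}(σ)) for a descent-starred permutation. -/
def starInv {n : ℕ} (σ : Equiv.Perm (Fin n)) (S : Finset ℕ) : ℕ :=
  invNum σ - ∑ i ∈ S, (1 + invEnd σ i)

/-- maj((σ,S)) = maj(σ) − Σ_{i∈S} |Des(σ) ∩ {i,…,n−1}| for a descent-starred permutation. -/
def starMaj {n : ℕ} (σ : Equiv.Perm (Fin n)) (S : Finset ℕ) : ℕ :=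
  majNum σ - ∑ i ∈ S, (DesSet σ ∩ Finset.Icc i (n - 1)).card

/-- Gaussian binomial coefficients: binom_q(m,0)=1, binom_q(m,r)=0 for r>m, and
binom_q(m,r) = binom_q(m−1,r−1) + q^r · binom_q(m−1,r). -/
def qbinom {R : Type*} [CommRing R] (q : R) : ℕ → ℕ → R
  | _, 0 => 1
  | 0, _ + 1 => 0
  | m + 1, r + 1 => qbinom q m r + q ^ (r + 1) * qbinom q m (r + 1)

/-- A_{n,j}(q) = Σ_{σ ∈ 𝔖_n, des(σ)=j} q^{maj(σ)}. -/
def eulerA {R : Type*} [CommRing R] (q : R) (n j : ℕ) : R :=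
  ∑ σ ∈ (Finset.univ : Finset (Equiv.Perm (Fin n))).filter (fun σ => desNum σ = j),
    q ^ majNum σ

/-- [m]_{p,q} = p^{m−1} + p^{m−2} q + ⋯ + p q^{m−2} + q^{m−1}. -/
def pqnum {R : Type*} [CommRing R] (p q : R) (m : ℕ) : R :=
  ∑ i ∈ Finset.range m, p ^ (m - 1 - i) * q ^ i

/-- [m]_{p,q}! = [1]_{p,q} [2]_{p,q} ⋯ [m]_{p,q}. -/
def pqfact {R : Type*} [CommRing R] (p q : R) (m : ℕ) : R :=
  ∏ i ∈ Finset.range m, pqnum p q (i + 1)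

/-- p,q-Stirling numbers: S_{0,0}(p,q)=1, S_{n,k}(p,q)=0 for k<0 or k>n, and
S_{n+1,k}(p,q) = S_{n,k−1}(p,q) + [k]_{p,q} S_{n,k}(p,q). -/
def pqStirling {R : Type*} [CommRing R] (p q : R) : ℕ → ℕ → R
  | 0, 0 => 1
  | 0, _ + 1 => 0
  | _ + 1, 0 => 0
  | n + 1, k + 1 => pqStirling p q n k + pqnum p q (k + 1) * pqStirling p q n (k + 1)

/-! Write the descents of `σ` as `i₀ < ⋯ < i_{d-1}`. The star weight `|Des(σ) ∩ [i_j, n-1]|` of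
`i_j` is `d - j`, so starring the descents with indices in `T ⊆ {0, …, d-1}`, `|T| = m`, gives
`m (n-1) + maj((σ,S)) = maj σ + m (n-1-d) + ∑ T`. Over the `m`-subsets of `{0, …, d-1}`, `q ^ ∑ T`
sums to `q ^ C(m,2) binom_q(d,m)`. Grouping the permutations by `d = des σ = n - i` produces the
`A_{n,d}`; the terms with `d < n - k` vanish. -/

section

variable {R : Type*} [CommRing R] (q : R)

theorem qbinom_eq_zero_of_lt : ∀ {m r : ℕ}, m < r → qbinom q m r = 0
  | 0, _ + 1, _ => rfl
  | m + 1, r + 1, h => by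
    rw [qbinom, qbinom_eq_zero_of_lt (by omega), qbinom_eq_zero_of_lt (m := m) (by omega),
      mul_zero, add_zero]

theorem sum_powersetCard_pow_sum_val : ∀ d m : ℕ,
    ∑ T ∈ (univ : Finset (Fin d)).powersetCard m, q ^ (∑ j ∈ T, (j : ℕ)) =
      q ^ m.choose 2 * qbinom q d m
  | _, 0 => by simp [qbinom]
  | 0, m + 1 => by rw [powersetCard_eq_empty.2 (by simp), sum_empty, qbinom, mul_zero]
  | d + 1, m + 1 => by
    have shift : ∀ r, ∑ T ∈ (univ : Finset (Fin d)).powersetCard r,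
        q ^ (∑ j ∈ T.map ⟨Fin.succ, Fin.succ_injective _⟩, (j : ℕ)) =
          q ^ r * ∑ T ∈ (univ : Finset (Fin d)).powersetCard r, q ^ (∑ j ∈ T, (j : ℕ)) := by
      intro r
      rw [mul_sum]
      refine sum_congr rfl fun T hT => ?_
      simp [sum_add_distrib, (mem_powersetCard.1 hT).2, pow_add, mul_comm]
    rw [Fin.univ_succ, cons_eq_insert, powersetCard_succ_insert (by simp), sum_union, sum_image,
      powersetCard_map, powersetCard_map, sum_map, sum_map]
    · simp only [RelEmbedding.coe_toEmbedding, mapEmbedding_apply, Nat.succ_eq_add_one,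
        sum_insert_zero (show ((0 : Fin (d + 1)) : ℕ) = 0 from rfl)]
      rw [shift, shift, sum_powersetCard_pow_sum_val d m, sum_powersetCard_pow_sum_val d (m + 1),
        qbinom, Nat.choose_succ_succ', Nat.choose_one_right]
      ring
    · exact insert_erase_invOn.2.injOn.mono fun T hT =>
        notMem_mono (mem_powersetCard.1 hT).1 (by simp)
    · refine disjoint_left.2 fun T hT hT' => ?_
      obtain ⟨U, -, rfl⟩ := mem_image.1 hT'
      exact notMem_mono (mem_powersetCard.1 hT).1 (by simp) (mem_insert_self 0 U)

theorem card_inter_Icc_orderEmbOfFin {D : Finset ℕ} {N : ℕ} (hD : D ⊆ Icc 1 N) (j : Fin #D) :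
    #(D ∩ Icc (D.orderEmbOfFin rfl j) N) = #D - j := by
  have : D ∩ Icc (D.orderEmbOfFin rfl j) N = (Ici j).map (D.orderEmbOfFin rfl).toEmbedding := by
    ext x
    simp only [mem_inter, mem_Icc, mem_map, mem_Ici, RelEmbedding.coe_toEmbedding]
    constructor
    · rintro ⟨hx, hjx, -⟩
      obtain ⟨i, rfl⟩ : x ∈ Set.range (D.orderEmbOfFin rfl) := by simpa using hx
      exact ⟨i, (D.orderEmbOfFin rfl).le_iff_le.1 hjx, rfl⟩
    · rintro ⟨i, hji, rfl⟩
      have hi := D.orderEmbOfFin_mem rfl i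
      exact ⟨hi, (D.orderEmbOfFin rfl).monotone hji, (mem_Icc.1 (hD hi)).2⟩
  rw [this, card_map, Fin.card_Ici]

theorem val_add_one_le_orderEmbOfFin {D : Finset ℕ} (hD : 0 ∉ D) (j : Fin #D) :
    (j : ℕ) + 1 ≤ D.orderEmbOfFin rfl j := by
  have hsub : (Iic j).map (D.orderEmbOfFin rfl).toEmbedding ⊆ Icc 1 (D.orderEmbOfFin rfl j) := by
    intro x hx
    simp only [mem_map, mem_Iic, RelEmbedding.coe_toEmbedding] at hx
    obtain ⟨i, hij, rfl⟩ := hx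
    have hi := D.orderEmbOfFin_mem rfl i
    exact mem_Icc.2 ⟨Nat.pos_of_ne_zero fun h => hD (h ▸ hi), (D.orderEmbOfFin rfl).monotone hij⟩
  simpa using card_le_card hsub

theorem sum_card_inter_Icc_le_sum {D : Finset ℕ} {N : ℕ} (hD : D ⊆ Icc 1 N) :
    ∑ i ∈ D, #(D ∩ Icc i N) ≤ ∑ i ∈ D, i := by
  have reindex : ∀ f : ℕ → ℕ, ∑ i ∈ D, f i = ∑ j, f (D.orderEmbOfFin rfl j) := fun f => by
    conv_lhs => rw [← map_orderEmbOfFin_univ D rfl]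
    rw [sum_map]
    rfl
  have hD0 : 0 ∉ D := fun h => by simpa using hD h
  rw [reindex, reindex]
  calc ∑ j, #(D ∩ Icc (D.orderEmbOfFin rfl j) N) = ∑ j : Fin #D, ((Fin.rev j : ℕ) + 1) :=
        sum_congr rfl fun j _ => by rw [card_inter_Icc_orderEmbOfFin hD, Fin.val_rev]; omega
    _ ≤ ∑ j, D.orderEmbOfFin rfl (Fin.rev j) :=
        sum_le_sum fun j _ => val_add_one_le_orderEmbOfFin hD0 _
    _ = ∑ j, D.orderEmbOfFin rfl j := Equiv.sum_comp Fin.revPerm _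

theorem pow_mul_sum_powersetCard_pow_sub {D : Finset ℕ} {N : ℕ}
    (hD : D ⊆ Icc 1 N) (m : ℕ) :
    q ^ (m * N) * ∑ S ∈ D.powersetCard m, q ^ (∑ i ∈ D, i - ∑ i ∈ S, #(D ∩ Icc i N)) =
      q ^ (m * (N - #D) + m.choose 2) * qbinom q #D m * q ^ ∑ i ∈ D, i := by
  set e := D.orderEmbOfFin rfl
  have hdN : #D ≤ N := by simpa using card_le_card hD
  have exponent : ∀ T ∈ (univ : Finset (Fin #D)).powersetCard m,
      m * N + (∑ i ∈ D, i - ∑ i ∈ T.map e.toEmbedding, #(D ∩ Icc i N)) =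
        m * (N - #D) + ∑ i ∈ D, i + ∑ j ∈ T, (j : ℕ) := by
    intro T hT
    -- makes the truncated subtraction in the exponent exact
    have hle : ∑ i ∈ T.map e.toEmbedding, #(D ∩ Icc i N) ≤ ∑ i ∈ D, i := by
      refine (sum_le_sum_of_subset ?_).trans (sum_card_inter_Icc_le_sum hD)
      exact (map_subset_map.2 (subset_univ T)).trans (map_orderEmbOfFin_univ D rfl).subset
    have hsplit : ∑ i ∈ T.map e.toEmbedding, #(D ∩ Icc i N) + ∑ j ∈ T, (j : ℕ) = m * #D := by
      rw [sum_map, ← sum_add_distrib, ← (mem_powersetCard.1 hT).2, ← smul_eq_mul, ← sum_const]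
      refine sum_congr rfl fun j _ => ?_
      rw [RelEmbedding.coe_toEmbedding, card_inter_Icc_orderEmbOfFin hD]
      omega
    have hmN : m * N = m * (N - #D) + m * #D := by rw [← mul_add, Nat.sub_add_cancel hdN]
    omega
  calc q ^ (m * N) * ∑ S ∈ D.powersetCard m, q ^ (∑ i ∈ D, i - ∑ i ∈ S, #(D ∩ Icc i N))
      = ∑ T ∈ (univ : Finset (Fin #D)).powersetCard m,
          q ^ (m * N + (∑ i ∈ D, i - ∑ i ∈ T.map e.toEmbedding, #(D ∩ Icc i N))) := by
        rw [show D.powersetCard m = (univ.powersetCard m).map (mapEmbedding e.toEmbedding).toEmbedding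
          by rw [← powersetCard_map, map_orderEmbOfFin_univ], sum_map, mul_sum]
        simp only [RelEmbedding.coe_toEmbedding, mapEmbedding_apply, pow_add]
    _ = ∑ T ∈ (univ : Finset (Fin #D)).powersetCard m,
          q ^ (m * (N - #D) + ∑ i ∈ D, i) * q ^ ∑ j ∈ T, (j : ℕ) :=
        sum_congr rfl fun T hT => by rw [exponent T hT, pow_add]
    _ = _ := by rw [← mul_sum, sum_powersetCard_pow_sum_val]; ring

theorem desSet_subset_Icc {n : ℕ} (σ : Equiv.Perm (Fin n)) : DesSet σ ⊆ Icc 1 (n - 1) :=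
  filter_subset _ _

theorem desNum_le {n : ℕ} (σ : Equiv.Perm (Fin n)) : desNum σ ≤ n - 1 := by
  simpa [desNum] using card_le_card (desSet_subset_Icc σ)

theorem pow_mul_sum_starSets_pow_starMaj {n : ℕ} (σ : Equiv.Perm (Fin n)) (m : ℕ) :
    q ^ (m * (n - 1)) * ∑ S ∈ starSets (DesSet σ) m, q ^ starMaj σ S =
      q ^ (m * (n - 1 - desNum σ) + m.choose 2) * qbinom q (desNum σ) m * q ^ majNum σ := by
  rw [starSets, ← powersetCard_eq_filter]
  exact pow_mul_sum_powersetCard_pow_sub q (desSet_subset_Icc σ) m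

theorem sum_perm_mul_pow_majNum (n : ℕ) (F : ℕ → R) :
    ∑ σ : Equiv.Perm (Fin n), F (desNum σ) * q ^ majNum σ =
      ∑ d ∈ Iic (n - 1), F d * eulerA q n d := by
  rw [← sum_fiberwise_of_maps_to fun σ _ => mem_Iic.2 (desNum_le σ)]
  refine sum_congr rfl fun d _ => ?_
  rw [eulerA, mul_sum]
  exact sum_congr rfl fun σ hσ => by rw [(mem_filter.1 hσ).2]

end

/-- For all 1 ≤ k ≤ n and q in a commutative ring,
q^{(n−k)(n−1)} · Σ_{(σ,S)∈𝔖^>_{n,n−k}} q^{maj((σ,S))}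
  = Σ_{i=1}^k q^{C(n−k,2)+(n−k)(i−1)} · binom_q(n−i,n−k) · A_{n,n−i}(q). -/
theorem statement9 {R : Type*} [CommRing R] (q : R) (n k : ℕ) (hk1 : 1 ≤ k) (hk2 : k ≤ n) :
    q ^ ((n - k) * (n - 1)) *
        (∑ σ : Equiv.Perm (Fin n), ∑ S ∈ starSets (DesSet σ) (n - k), q ^ starMaj σ S) =
      ∑ i ∈ Finset.Icc 1 k,
        q ^ (Nat.choose (n - k) 2 + (n - k) * (i - 1)) * qbinom q (n - i) (n - k) *
          eulerA q n (n - i) := by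
  calc _ = ∑ σ : Equiv.Perm (Fin n), q ^ ((n - k) * (n - 1 - desNum σ) + (n - k).choose 2) *
          qbinom q (desNum σ) (n - k) * q ^ majNum σ := by
        rw [mul_sum]
        exact sum_congr rfl fun σ _ => pow_mul_sum_starSets_pow_starMaj q σ (n - k)
    _ = ∑ d ∈ Iic (n - 1), q ^ ((n - k) * (n - 1 - d) + (n - k).choose 2) *
          qbinom q d (n - k) * eulerA q n d :=
        sum_perm_mul_pow_majNum q n fun d => q ^ ((n - k) * (n - 1 - d) + (n - k).choose 2) *
          qbinom q d (n - k)
    _ = ∑ d ∈ Icc (n - k) (n - 1), q ^ ((n - k) * (n - 1 - d) + (n - k).choose 2) *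
          qbinom q d (n - k) * eulerA q n d := by
        refine (sum_subset (fun d hd => mem_Iic.2 (mem_Icc.1 hd).2) fun d hd hd' => ?_).symm
        simp only [mem_Iic, mem_Icc] at hd hd'
        rw [qbinom_eq_zero_of_lt q (by omega), mul_zero, zero_mul]
    _ = _ := by
        refine sum_nbij' (n - ·) (n - ·) ?_ ?_ ?_ ?_ ?_ <;> intro d hd <;> rw [mem_Icc] at hd
        any_goals first | omega | (rw [mem_Icc]; omega)
        rw [Nat.sub_sub_self (by omega), Nat.sub_right_comm, add_comm]
end

section
/- For all n ≥ 1, all 0 ≤ k ≤ n−1, and every element q of a commutative ring, Σ_{(σ,S)∈𝔖^<_{n,k}} q^{comaj(σ) − Σ_{i∈S} |Asc(σ) ∩ {i, i+1, …, n−1}|} = [n−k]_q! · S_{n,n−k}(q), where comaj(σ) = Σ_{i∈Asc(σ)} i. (The exponent is a nonnegative integer.) -/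
open Finset

/-- comaj(σ) = Σ_{i∈Asc(σ)} i. -/
def comajNum {n : ℕ} (σ : Equiv.Perm (Fin n)) : ℕ := ∑ i ∈ AscSet σ, i

/-!
Insert the new maximum `n + 1` into a permutation `τ` of `[n]` with `m` ascents. At the `m + 1`
positions at the front or right after an ascent, the number of ascents stays `m` and `comaj` grows
by `0, 1, …, m`; at the other `n - m` positions an ascent is created and `comaj` grows by
`m + 1, …, n`. Summing over the stars first, `σ` contributes `q ^ comaj σ` times
`Σ_{U ⊆ [m], |U| = k} q^{-ΣU}` (the stars enter only through their ranks in `Asc σ`). An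
absorption identity for these subset sums then shows that both sides satisfy
`f (n+1) (k+1) = [n-k]_q (f n (k+1) + f n k)` and `f (n+1) 0 = [n+1]_q f n 0`, and they agree
for `n = 1`. Negative powers of `q` are handled over a field with `q ∉ {0, 1}`; the general case
follows by specialising the identity in `Frac ℤ[X]` at `X = q`.
-/

open Finset

section QAnalogues

variable {R : Type*} [CommRing R] (q : R)

@[simp] lemma qnum_zero : qnum q 0 = 0 := sum_range_zero _

lemma qnum_add (a b : ℕ) : qnum q (a + b) = qnum q a + q ^ a * qnum q b := by
  simp only [qnum, sum_range_add, pow_add, mul_sum]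

lemma qnum_mul_sub_one (m : ℕ) : qnum q m * (q - 1) = q ^ m - 1 := geom_sum_mul q m

lemma sum_range_pow_sub {n s : ℕ} (h : s ≤ n + 1) :
    ∑ r ∈ range s, q ^ (n - r) = q ^ (n + 1 - s) * qnum q s := by
  rw [← sum_range_reflect, qnum, mul_sum]
  refine sum_congr rfl fun r hr => ?_
  rw [← pow_add]
  congr 1
  simp only [mem_range] at hr
  omega

lemma qfact_succ (m : ℕ) : qfact q (m + 1) = qfact q m * qnum q (m + 1) := prod_range_succ _ _

lemma qStirling_eq_zero_of_lt : ∀ {n k : ℕ}, n < k → qStirling q n k = 0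
  | 0, _ + 1, _ => rfl
  | n + 1, k + 1, h => by
    rw [qStirling, qStirling_eq_zero_of_lt (by omega), qStirling_eq_zero_of_lt (by omega),
      mul_zero, add_zero]

lemma qStirling_self : ∀ n : ℕ, qStirling q n n = 1
  | 0 => rfl
  | n + 1 => by
    rw [qStirling, qStirling_self n, qStirling_eq_zero_of_lt q n.lt_succ_self, mul_zero, add_zero]

lemma qfact_mul_qStirling_succ_succ (n k : ℕ) :
    qfact q (n + 1 - (k + 1)) * qStirling q (n + 1) (n + 1 - (k + 1)) =
      qnum q (n - k) * (qfact q (n - (k + 1)) * qStirling q n (n - (k + 1)) +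
        qfact q (n - k) * qStirling q n (n - k)) := by
  rw [Nat.add_sub_add_right]
  obtain hnk | ⟨j, hj⟩ : n - k = 0 ∨ ∃ j, n - k = j + 1 := by
    rcases n - k with _ | j
    exacts [.inl rfl, .inr ⟨j, rfl⟩]
  · rw [hnk, qnum_zero, zero_mul]
    exact mul_eq_zero_of_right _ rfl
  · rw [hj, show n - (k + 1) = j by omega, qStirling, qfact_succ]
    ring

variable {S : Type*} [CommRing S] (f : R →+* S)

lemma map_qnum (m : ℕ) : f (qnum q m) = qnum (f q) m := by
  simp only [qnum, map_sum, map_pow]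

lemma map_qfact (m : ℕ) : f (qfact q m) = qfact (f q) m := by
  simp only [qfact, map_prod, map_qnum]

lemma map_qStirling : ∀ n k : ℕ, f (qStirling q n k) = qStirling (f q) n k
  | 0, 0 => map_one f
  | 0, _ + 1 | _ + 1, 0 => map_zero f
  | n + 1, k + 1 => by
    rw [qStirling, qStirling, map_add, map_mul, map_qnum, map_qStirling n k,
      map_qStirling n (k + 1)]

end QAnalogues

lemma pow_mul_inv_pow_of_le {G₀ : Type*} [GroupWithZero G₀] {q : G₀} (hq : q ≠ 0) {a b : ℕ}
    (h : b ≤ a) : q ^ a * q⁻¹ ^ b = q ^ (a - b) := by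
  rw [inv_pow, pow_sub₀ q hq h]

section Powersets

variable {α M : Type*} [AddCommMonoid M]

lemma sum_powersetCard_succ_insert [DecidableEq α] {a : α} {s : Finset α} (ha : a ∉ s) (k : ℕ)
    (f : Finset α → M) :
    ∑ U ∈ powersetCard (k + 1) (insert a s), f U =
      ∑ U ∈ powersetCard (k + 1) s, f U + ∑ U ∈ powersetCard k s, f (insert a U) := by
  have notMem {U} (hU : U ∈ powersetCard k s) : a ∉ U := fun h => ha ((mem_powersetCard.1 hU).1 h)
  rw [powersetCard_succ_insert ha, sum_union, sum_image]
  · intro U hU V hV h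
    rw [← erase_insert (notMem hU), ← erase_insert (notMem hV), h]
  · refine disjoint_left.2 fun U hU hU' => ?_
    obtain ⟨V, -, rfl⟩ := mem_image.1 hU'
    exact ha ((mem_powersetCard.1 hU).1 (mem_insert_self a V))

lemma sum_powersetCard_image_of_bijOn {β : Type*} [DecidableEq β] {A : Finset α} {T : Finset β}
    {r : α → β} (hr : Set.BijOn r A T) (k : ℕ) (f : Finset β → M) :
    ∑ S ∈ powersetCard k A, f (S.image r) = ∑ U ∈ powersetCard k T, f U := by
  refine sum_nbij (·.image r) (fun S hS => ?_) (fun S hS S' hS' h => ?_) (fun U hU => ?_)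
    fun _ _ => rfl
  · obtain ⟨hSA, rfl⟩ := mem_powersetCard.1 hS
    exact mem_powersetCard.2 ⟨image_subset_iff.2 fun x hx => hr.mapsTo (hSA hx),
      card_image_of_injOn (hr.injOn.mono (coe_subset.2 hSA))⟩
  · have subset_of_image_eq {S S' : Finset α} (hS : S ⊆ A) (hS' : S' ⊆ A)
        (h : S.image r = S'.image r) : S ⊆ S' := fun x hx => by
      obtain ⟨y, hy, hyx⟩ := mem_image.1 (h ▸ mem_image_of_mem r hx)
      rwa [← hr.injOn (hS' hy) (hS hx) hyx]
    have hSA := (mem_powersetCard.1 hS).1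
    have hSA' := (mem_powersetCard.1 hS').1
    exact (subset_of_image_eq hSA hSA' h).antisymm (subset_of_image_eq hSA' hSA h.symm)
  · obtain ⟨hUT, rfl⟩ := mem_powersetCard.1 hU
    have himage : (A.filter (r · ∈ U)).image r = U := by
      refine (image_subset_iff.2 fun x hx => (mem_filter.1 hx).2).antisymm fun u hu => ?_
      obtain ⟨a, ha, rfl⟩ := hr.surjOn (hUT hu)
      exact mem_image_of_mem r (mem_filter.2 ⟨ha, hu⟩)
    refine ⟨A.filter (r · ∈ U), mem_powersetCard.2 ⟨filter_subset _ _, ?_⟩, himage⟩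
    rw [← card_image_of_injOn (hr.injOn.mono (coe_subset.2 (filter_subset _ _))), himage]

end Powersets

section Ranks

variable {α : Type*} [LinearOrder α] (B : Finset α)

lemma bijOn_card_filter_lt : Set.BijOn (fun j => #(B.filter (j < ·))) B (range #B) := by
  have maps : Set.MapsTo (fun j => #(B.filter (j < ·))) B (range #B) := fun j hj =>
    mem_range.2 (card_lt_card (filter_ssubset.2 ⟨j, hj, lt_irrefl j⟩))
  have inj : Set.InjOn (fun j => #(B.filter (j < ·))) B := by
    refine StrictAntiOn.injOn fun i hi j hj hij => card_lt_card ?_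
    refine (ssubset_iff_of_subset fun x hx => ?_).2 ⟨j, mem_filter.2 ⟨hj, hij⟩, by simp⟩
    simp only [mem_filter] at hx ⊢
    exact ⟨hx.1, hij.trans hx.2⟩
  exact ⟨maps, inj, surjOn_of_injOn_of_card_le _ maps inj (by simp)⟩

lemma bijOn_card_filter_le : Set.BijOn (fun j => #(B.filter (j ≤ ·))) B (Icc 1 #B) := by
  have maps : Set.MapsTo (fun j => #(B.filter (j ≤ ·))) B (Icc 1 #B) := fun j hj =>
    mem_Icc.2 ⟨card_pos.2 ⟨j, mem_filter.2 ⟨hj, le_rfl⟩⟩, card_filter_le _ _⟩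
  have inj : Set.InjOn (fun j => #(B.filter (j ≤ ·))) B := by
    refine StrictAntiOn.injOn fun i hi j hj hij => card_lt_card ?_
    refine (ssubset_iff_of_subset fun x hx => ?_).2 ⟨i, mem_filter.2 ⟨hi, le_rfl⟩, by simp [hij]⟩
    simp only [mem_filter] at hx ⊢
    exact ⟨hx.1, hij.le.trans hx.2⟩
  exact ⟨maps, inj, surjOn_of_injOn_of_card_le _ maps inj (by simp)⟩

lemma sum_card_filter_lt {M : Type*} [AddCommMonoid M] (f : ℕ → M) :
    ∑ j ∈ B, f #(B.filter (j < ·)) = ∑ r ∈ range #B, f r :=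
  let h := bijOn_card_filter_lt B
  sum_nbij _ h.mapsTo h.injOn h.surjOn fun _ _ => rfl

end Ranks

lemma sum_card_filter_le_le_sum {A S : Finset ℕ} (hA : 0 ∉ A) (hS : S ⊆ A) :
    ∑ i ∈ S, #(A.filter (i ≤ ·)) ≤ ∑ a ∈ A, a := by
  calc ∑ i ∈ S, #(A.filter (i ≤ ·)) = ∑ a ∈ A, #(S.filter (· ≤ a)) := by
        simp only [card_filter]
        exact sum_comm
    _ ≤ ∑ a ∈ A, #(Icc 1 a) := sum_le_sum fun a _ => card_le_card fun x hx => by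
        obtain ⟨hxS, hxa⟩ := mem_filter.1 hx
        have : x ≠ 0 := fun h => hA (h ▸ hS hxS)
        exact mem_Icc.2 ⟨by omega, hxa⟩
    _ = ∑ a ∈ A, a := by simp

lemma card_filter_lt_add_card_filter_lt_sdiff {A : Finset ℕ} {n : ℕ} (hA : A ⊆ range (n + 1))
    (j : ℕ) : #(A.filter (j < ·)) + #((range (n + 1) \ A).filter (j < ·)) = n - j := by
  rw [← card_union_of_disjoint (disjoint_filter_filter disjoint_sdiff), ← filter_union,
    union_sdiff_of_subset hA, show (range (n + 1)).filter (j < ·) = Ioc j n by ext; simp; omega,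
    Nat.card_Ioc]

section SubsetWeight

variable {R : Type*} [CommRing R] (p : R)

def subsetWeight (m k : ℕ) : R := ∑ U ∈ powersetCard k (Icc 1 m), p ^ ∑ u ∈ U, u

@[simp] lemma subsetWeight_zero_right (m : ℕ) : subsetWeight p m 0 = 1 := by
  simp [subsetWeight]

lemma subsetWeight_eq_zero_of_lt {m k : ℕ} (h : m < k) : subsetWeight p m k = 0 := by
  rw [subsetWeight, powersetCard_eq_empty.2 (by simpa using h), sum_empty]

lemma subsetWeight_succ_succ (m k : ℕ) :
    subsetWeight p (m + 1) (k + 1) =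
      subsetWeight p m (k + 1) + p ^ (m + 1) * subsetWeight p m k := by
  rw [subsetWeight, ← insert_Icc_right_eq_Icc_add_one (by omega),
    sum_powersetCard_succ_insert (by simp), subsetWeight, subsetWeight, mul_sum]
  refine congrArg _ (sum_congr rfl fun U hU => ?_)
  rw [sum_insert fun h => by simpa using (mem_powersetCard.1 hU).1 h, pow_add]

lemma subsetWeight_succ_succ' (m k : ℕ) :
    subsetWeight p (m + 1) (k + 1) =
      p ^ (k + 1) * (subsetWeight p m (k + 1) + subsetWeight p m k) := by
  have shift (j : ℕ) : ∑ U ∈ powersetCard j (Icc 2 (m + 1)), p ^ ∑ u ∈ U, u =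
      p ^ j * subsetWeight p m j := by
    rw [← map_add_right_Icc 1 m 1, powersetCard_map, sum_map, subsetWeight, mul_sum]
    refine sum_congr rfl fun U hU => ?_
    simp [sum_add_distrib, pow_add, (mem_powersetCard.1 hU).2, mul_comm]
  have insert_one (U) (hU : U ∈ powersetCard k (Icc 2 (m + 1))) :
      p ^ ∑ u ∈ insert 1 U, u = p * p ^ ∑ u ∈ U, u := by
    rw [sum_insert fun h => by simpa using (mem_powersetCard.1 hU).1 h, pow_add, pow_one]
  have hIcc : Icc 1 (m + 1) = insert 1 (Icc 2 (m + 1)) :=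
    (insert_Icc_add_one_left_eq_Icc le_add_self).symm
  rw [subsetWeight, hIcc, sum_powersetCard_succ_insert (by simp), sum_congr rfl insert_one,
    ← mul_sum, shift, shift]
  ring

lemma sum_powersetCard_pow_sum_card_filter_le {α : Type*} [LinearOrder α] (A : Finset α)
    (k : ℕ) : ∑ S ∈ powersetCard k A, p ^ ∑ i ∈ S, #(A.filter (i ≤ ·)) = subsetWeight p #A k := by
  have h := bijOn_card_filter_le A
  rw [subsetWeight, ← sum_powersetCard_image_of_bijOn h k fun U => p ^ ∑ u ∈ U, u]
  exact sum_congr rfl fun S hS => by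
    rw [sum_image (h.injOn.mono (coe_subset.2 (mem_powersetCard.1 hS).1))]

end SubsetWeight

section SubsetWeightInv

variable {K : Type*} [Field K] {q : K}

/-- Removing the largest or the smallest element of `[m + 1]` gives two recurrences for
`subsetWeight`; comparing them yields this identity times `q - 1`. -/
lemma qnum_mul_subsetWeight_inv_succ (hq0 : q ≠ 0) (hq1 : q ≠ 1) {m k : ℕ} (hk : k ≤ m) :
    q ^ (m - k) * qnum q (k + 1) * subsetWeight q⁻¹ m (k + 1) =
      qnum q (m - k) * subsetWeight q⁻¹ m k := by
  have top := subsetWeight_succ_succ q⁻¹ m k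
  have bottom := subsetWeight_succ_succ' q⁻¹ m k
  have e1 : q ^ (m + 1) * q⁻¹ ^ (m + 1) = 1 := by rw [← mul_pow, mul_inv_cancel₀ hq0, one_pow]
  have e2 : q ^ (m + 1) * q⁻¹ ^ (k + 1) = q ^ (m - k) := by
    rw [pow_mul_inv_pow_of_le hq0 (by omega), Nat.add_sub_add_right]
  have e3 : q ^ (m + 1) = q ^ (m - k) * q ^ (k + 1) := by rw [← pow_add]; congr 1; omega
  apply mul_left_cancel₀ (sub_ne_zero.2 hq1)
  linear_combination (q ^ (m - k) * subsetWeight q⁻¹ m (k + 1)) * qnum_mul_sub_one q (k + 1)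
    - subsetWeight q⁻¹ m k * qnum_mul_sub_one q (m - k) + q ^ (m + 1) * (bottom - top)
    - subsetWeight q⁻¹ m (k + 1) * e3 + (subsetWeight q⁻¹ m (k + 1) + subsetWeight q⁻¹ m k) * e2
    - subsetWeight q⁻¹ m k * e1

lemma subsetWeight_inv_recurrence (hq0 : q ≠ 0) (hq1 : q ≠ 1) {m n : ℕ} (hmn : m ≤ n) (k : ℕ) :
    qnum q (m + 1) * subsetWeight q⁻¹ m (k + 1) +
        q ^ (m + 1) * qnum q (n - m) * subsetWeight q⁻¹ (m + 1) (k + 1) =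
      qnum q (n - k) * (subsetWeight q⁻¹ m (k + 1) + subsetWeight q⁻¹ m k) := by
  rcases le_or_gt k m with hk | hk
  · have split_m : qnum q (m + 1) = qnum q (m - k) + q ^ (m - k) * qnum q (k + 1) := by
      rw [← qnum_add]; congr 1; omega
    have split_n : qnum q (n - k) = qnum q (m - k) + q ^ (m - k) * qnum q (n - m) := by
      rw [← qnum_add]; congr 1; omega
    have e : q ^ (m + 1) * q⁻¹ ^ (k + 1) = q ^ (m - k) := by
      rw [pow_mul_inv_pow_of_le hq0 (by omega), Nat.add_sub_add_right]
    rw [subsetWeight_succ_succ', split_m, split_n]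
    linear_combination qnum_mul_subsetWeight_inv_succ hq0 hq1 hk +
      (qnum q (n - m) * (subsetWeight q⁻¹ m (k + 1) + subsetWeight q⁻¹ m k)) * e
  · rw [subsetWeight_eq_zero_of_lt _ (by omega : m < k + 1),
      subsetWeight_eq_zero_of_lt _ (by omega : m + 1 < k + 1),
      subsetWeight_eq_zero_of_lt _ (by omega : m < k)]
    ring

end SubsetWeightInv

section Insertion

open Equiv

variable {n : ℕ}

lemma oneline_le (σ : Perm (Fin n)) (j : ℕ) : oneline σ j ≤ n := by
  unfold oneline
  split
  · exact Fin.isLt _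
  · exact Nat.zero_le n

lemma mem_AscSet {σ : Perm (Fin n)} {i : ℕ} :
    i ∈ AscSet σ ↔ 1 ≤ i ∧ i ≤ n - 1 ∧ oneline σ i < oneline σ (i + 1) := by
  simp [AscSet, and_assoc]

lemma zero_notMem_AscSet (σ : Perm (Fin n)) : 0 ∉ AscSet σ := by
  simp [mem_AscSet]

lemma card_AscSet_le (σ : Perm (Fin n)) : #(AscSet σ) ≤ n - 1 :=
  (card_le_card (filter_subset _ _)).trans (by simp)

lemma insert_zero_AscSet_subset_range (σ : Perm (Fin n)) :
    insert 0 (AscSet σ) ⊆ range (n + 1) := fun x hx => by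
  rcases mem_insert.1 hx with rfl | hx
  · simp
  · have := mem_AscSet.1 hx
    simp only [mem_range]
    omega

lemma comajNum_eq_sum_insert_zero (σ : Perm (Fin n)) : comajNum σ = ∑ x ∈ insert 0 (AscSet σ), x :=
  (sum_insert_zero (f := id) rfl).symm

/-- The permutation of `Fin (n + 1)` whose one-line notation is that of `τ` with the new largest
value `n + 1` inserted at (zero-based) position `p`. -/
def insertMax (τ : Perm (Fin n)) (p : Fin (n + 1)) : Perm (Fin (n + 1)) :=
  (finSuccEquiv' p).trans ((optionCongr τ).trans (finSuccEquiv' (Fin.last n)).symm)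

lemma insertMax_apply_self (τ : Perm (Fin n)) (p : Fin (n + 1)) :
    insertMax τ p p = Fin.last n := by
  simp [insertMax]

lemma insertMax_apply_succAbove (τ : Perm (Fin n)) (p : Fin (n + 1)) (j : Fin n) :
    insertMax τ p (p.succAbove j) = (τ j).castSucc := by
  simp [insertMax, ← Fin.succAbove_last]

lemma insertMax_injective :
    Function.Injective fun x : Perm (Fin n) × Fin (n + 1) => insertMax x.1 x.2 := by
  rintro ⟨τ, p⟩ ⟨τ', p'⟩ h
  dsimp only at h
  obtain rfl : p = p' := by
    by_contra hne
    obtain ⟨j, hj⟩ := Fin.exists_succAbove_eq hne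
    have := insertMax_apply_self τ p
    rw [h, ← hj, insertMax_apply_succAbove] at this
    exact (Fin.castSucc_lt_last (τ' j)).ne this
  refine Prod.ext (Equiv.ext fun j => Fin.castSucc_injective n ?_) rfl
  rw [← insertMax_apply_succAbove, ← insertMax_apply_succAbove, h]

lemma sum_perm_succ_eq_sum_insertMax {M : Type*} [AddCommMonoid M] (f : Perm (Fin (n + 1)) → M) :
    ∑ σ, f σ = ∑ τ : Perm (Fin n), ∑ p : Fin (n + 1), f (insertMax τ p) := by
  have bij : Function.Bijective fun x : Perm (Fin n) × Fin (n + 1) => insertMax x.1 x.2 := by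
    refine (Fintype.bijective_iff_injective_and_card _).2 ⟨insertMax_injective, ?_⟩
    simp only [Fintype.card_prod, Fintype.card_perm, Fintype.card_fin, Nat.factorial_succ,
      mul_comm]
  rw [← Fintype.sum_prod_type', Fintype.sum_bijective _ bij _ _ fun _ => rfl]

variable (τ : Perm (Fin n)) (p : Fin (n + 1))

lemma oneline_insertMax_of_le {j : ℕ} (h : j ≤ p) : oneline (insertMax τ p) j = oneline τ j := by
  rcases Nat.eq_zero_or_pos j with rfl | hj
  · simp [oneline]
  have hjn : j - 1 < n := by omega
  rw [oneline, oneline, dif_pos ⟨hj, by omega⟩, dif_pos ⟨hj, by omega⟩]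
  have : (⟨j - 1, by omega⟩ : Fin (n + 1)) = p.succAbove ⟨j - 1, hjn⟩ := by
    rw [Fin.succAbove_of_castSucc_lt _ _ (by rw [Fin.lt_def]; simp; omega)]
    rfl
  rw [this, insertMax_apply_succAbove, Fin.val_castSucc]

lemma oneline_insertMax_self : oneline (insertMax τ p) (p + 1) = n + 1 := by
  rw [oneline, dif_pos ⟨by omega, by omega⟩]
  have : (⟨p + 1 - 1, by omega⟩ : Fin (n + 1)) = p := Fin.ext (by simp)
  rw [this, insertMax_apply_self, Fin.val_last]

lemma oneline_insertMax_of_gt {j : ℕ} (h : p + 1 < j) :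
    oneline (insertMax τ p) j = oneline τ (j - 1) := by
  by_cases hjn : j ≤ n + 1
  · rw [oneline, oneline, dif_pos ⟨by omega, hjn⟩, dif_pos ⟨by omega, by omega⟩]
    have : (⟨j - 1, by omega⟩ : Fin (n + 1)) = p.succAbove ⟨j - 2, by omega⟩ := by
      rw [Fin.succAbove_of_le_castSucc _ _ (by rw [Fin.le_def]; simp; omega)]
      ext; simp; omega
    rw [this, insertMax_apply_succAbove, Fin.val_castSucc]
    rfl
  · rw [oneline, oneline, dif_neg (by omega), dif_neg (by omega)]

lemma mem_AscSet_insertMax {i : ℕ} :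
    i ∈ AscSet (insertMax τ p) ↔
      (i < p ∧ i ∈ AscSet τ) ∨ (i = p ∧ 1 ≤ i) ∨ (p + 1 < i ∧ i - 1 ∈ AscSet τ) := by
  have hp := p.isLt
  simp only [mem_AscSet]
  obtain hi | rfl | rfl | hi : i < p ∨ i = p ∨ i = p + 1 ∨ p + 1 < i := by omega
  · rw [oneline_insertMax_of_le τ p hi.le, oneline_insertMax_of_le τ p (j := i + 1) hi]
    omega
  · have := oneline_le τ p
    rw [oneline_insertMax_of_le τ p le_rfl, oneline_insertMax_self]
    omega
  · have := oneline_le τ (p + 1 + 1 - 1)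
    rw [oneline_insertMax_self, oneline_insertMax_of_gt τ p (by omega)]
    omega
  · rw [oneline_insertMax_of_gt τ p hi, oneline_insertMax_of_gt τ p (by omega)]
    simp only [Nat.add_sub_cancel, Nat.sub_add_cancel (by omega : 1 ≤ i)]
    omega

def shiftAbove (p x : ℕ) : ℕ := if x ≤ p then x else x + 1

lemma shiftAbove_injective (p : ℕ) : Function.Injective (shiftAbove p) := by
  intro x y h
  simp only [shiftAbove] at h
  split_ifs at h <;> omega

/-- Position `0` counts as a virtual ascent, so that inserting at the front behaves like inserting
right after an ascent. -/
lemma insert_zero_AscSet_insertMax :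
    insert 0 (AscSet (insertMax τ p)) =
      (insert (p : ℕ) (insert 0 (AscSet τ))).image (shiftAbove p) := by
  ext i
  simp only [mem_insert, mem_image, mem_AscSet_insertMax, shiftAbove]
  constructor
  · rintro (rfl | ⟨hi, hA⟩ | ⟨rfl, -⟩ | ⟨hi, hA⟩)
    · exact ⟨0, .inr (.inl rfl), if_pos (Nat.zero_le _)⟩
    · exact ⟨i, .inr (.inr hA), if_pos hi.le⟩
    · exact ⟨p, .inl rfl, if_pos le_rfl⟩
    · exact ⟨i - 1, .inr (.inr hA), by rw [if_neg (by omega)]; omega⟩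
  · rintro ⟨x, hx, rfl⟩
    have hx1 : x ∈ AscSet τ → 1 ≤ x := fun h => (mem_AscSet.1 h).1
    rcases hx with rfl | rfl | hA
    · rw [if_pos le_rfl]
      omega
    · exact .inl (if_pos (Nat.zero_le _))
    · split_ifs with hxp
      · rcases hxp.lt_or_eq with hxp | rfl
        exacts [.inr (.inl ⟨hxp, hA⟩), .inr (.inr (.inl ⟨rfl, hx1 hA⟩))]
      · exact .inr (.inr (.inr ⟨by omega, by simpa using hA⟩))

lemma card_AscSet_insertMax :
    #(AscSet (insertMax τ p)) + 1 = #(insert (p : ℕ) (insert 0 (AscSet τ))) := by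
  rw [← card_insert_of_notMem (zero_notMem_AscSet _), insert_zero_AscSet_insertMax,
    card_image_of_injective _ (shiftAbove_injective p)]

lemma comajNum_insertMax :
    comajNum (insertMax τ p) = ∑ x ∈ insert (p : ℕ) (insert 0 (AscSet τ)), x +
      #((insert (p : ℕ) (insert 0 (AscSet τ))).filter ((p : ℕ) < ·)) := by
  rw [comajNum, ← sum_insert_zero (a := 0) rfl, insert_zero_AscSet_insertMax,
    sum_image fun x _ y _ h => shiftAbove_injective p h, card_filter, ← sum_add_distrib]
  refine sum_congr rfl fun x _ => ?_
  simp only [shiftAbove]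
  split_ifs <;> omega

lemma card_AscSet_insertMax_of_mem (hp : (p : ℕ) ∈ insert 0 (AscSet τ)) :
    #(AscSet (insertMax τ p)) = #(AscSet τ) := by
  have h := card_AscSet_insertMax τ p
  rw [insert_eq_of_mem hp, card_insert_of_notMem (zero_notMem_AscSet τ)] at h
  omega

lemma comajNum_insertMax_of_mem (hp : (p : ℕ) ∈ insert 0 (AscSet τ)) :
    comajNum (insertMax τ p) = comajNum τ + #((insert 0 (AscSet τ)).filter ((p : ℕ) < ·)) := by
  rw [comajNum_insertMax, insert_eq_of_mem hp, comajNum_eq_sum_insert_zero τ]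

lemma card_AscSet_insertMax_of_notMem (hp : (p : ℕ) ∉ insert 0 (AscSet τ)) :
    #(AscSet (insertMax τ p)) = #(AscSet τ) + 1 := by
  have h := card_AscSet_insertMax τ p
  rw [card_insert_of_notMem hp, card_insert_of_notMem (zero_notMem_AscSet τ)] at h
  omega

lemma comajNum_insertMax_of_notMem (hp : (p : ℕ) ∉ insert 0 (AscSet τ)) :
    comajNum (insertMax τ p) =
      comajNum τ + (p + #((insert 0 (AscSet τ)).filter ((p : ℕ) < ·))) := by
  rw [comajNum_insertMax, sum_insert hp, filter_insert, if_neg (lt_irrefl _),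
    comajNum_eq_sum_insert_zero τ]
  ring

variable {R : Type*} [CommRing R] (q : R)

lemma sum_insertMax_pow_comajNum_mul (g : ℕ → R) {m : ℕ} (hm : #(AscSet τ) = m) :
    ∑ p : Fin (n + 1), q ^ comajNum (insertMax τ p) * g #(AscSet (insertMax τ p)) =
      q ^ comajNum τ * (qnum q (m + 1) * g m + q ^ (m + 1) * qnum q (n - m) * g (m + 1)) := by
  set A := insert 0 (AscSet τ)
  set c := comajNum τ
  have hA : A ⊆ range (n + 1) := insert_zero_AscSet_subset_range τ
  have hcardA : #A = m + 1 := by rw [card_insert_of_notMem (zero_notMem_AscSet τ), hm]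
  have hmn : m ≤ n := by simpa [hcardA] using card_le_card hA
  have summand (x : Fin (n + 1)) :
      q ^ comajNum (insertMax τ x) * g #(AscSet (insertMax τ x)) =
        if (x : ℕ) ∈ A then q ^ (c + #(A.filter ((x : ℕ) < ·))) * g m
        else q ^ (c + (n - #((range (n + 1) \ A).filter ((x : ℕ) < ·)))) * g (m + 1) := by
    split_ifs with hx
    · rw [card_AscSet_insertMax_of_mem τ x hx, comajNum_insertMax_of_mem τ x hx, hm]
    · have := card_filter_lt_add_card_filter_lt_sdiff hA x
      rw [card_AscSet_insertMax_of_notMem τ x hx, comajNum_insertMax_of_notMem τ x hx, hm]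
      congr 2
      simp only [A] at this ⊢
      omega
  rw [sum_congr rfl fun x _ => summand x, Fin.sum_univ_eq_sum_range (fun j => if j ∈ A then
      q ^ (c + #(A.filter (j < ·))) * g m
      else q ^ (c + (n - #((range (n + 1) \ A).filter (j < ·)))) * g (m + 1)),
    sum_ite, filter_mem_eq_inter, inter_eq_right.2 hA, filter_notMem_eq_sdiff,
    sum_card_filter_lt A fun r => q ^ (c + r) * g m,
    sum_card_filter_lt _ fun r => q ^ (c + (n - r)) * g (m + 1), hcardA,
    card_sdiff_of_subset hA, card_range, hcardA]
  simp only [pow_add, ← mul_sum, ← sum_mul]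
  rw [sum_range_pow_sub q (by omega), show n + 1 - (n + 1 - (m + 1)) = m + 1 by omega,
    show n + 1 - (m + 1) = n - m by omega]
  simp only [qnum]
  ring

end Insertion

section StarredSum

open Equiv

variable {R : Type*} [CommRing R]

def ascStarredComajSum (q : R) (n k : ℕ) : R :=
  ∑ σ : Perm (Fin n), ∑ S ∈ starSets (AscSet σ) k,
    q ^ (comajNum σ - ∑ i ∈ S, #(AscSet σ ∩ Icc i (n - 1)))

lemma map_ascStarredComajSum {S : Type*} [CommRing S] (f : R →+* S) (q : R) (n k : ℕ) :
    f (ascStarredComajSum q n k) = ascStarredComajSum (f q) n k := by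
  simp only [ascStarredComajSum, map_sum, map_pow]

lemma ascStarredComajSum_zero_zero (q : R) : ascStarredComajSum q 0 0 = 1 := by
  simp [ascStarredComajSum, starSets, comajNum, AscSet, filter_singleton]

end StarredSum

section StarredSumField

open Equiv

variable {K : Type*} [Field K] {q : K}

lemma sum_starSets_AscSet (hq : q ≠ 0) {n : ℕ} (σ : Perm (Fin n)) (k : ℕ) :
    ∑ S ∈ starSets (AscSet σ) k, q ^ (comajNum σ - ∑ i ∈ S, #(AscSet σ ∩ Icc i (n - 1))) =
      q ^ comajNum σ * subsetWeight q⁻¹ #(AscSet σ) k := by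
  have hIcc (i : ℕ) : AscSet σ ∩ Icc i (n - 1) = (AscSet σ).filter (i ≤ ·) := by
    ext x
    simp only [mem_inter, mem_Icc, mem_filter, and_congr_right_iff, and_iff_left_iff_imp]
    exact fun hx _ => (mem_AscSet.1 hx).2.1
  rw [starSets, ← powersetCard_eq_filter, ← sum_powersetCard_pow_sum_card_filter_le, mul_sum]
  refine sum_congr rfl fun S hS => ?_
  simp only [hIcc]
  have hle : ∑ i ∈ S, #((AscSet σ).filter (i ≤ ·)) ≤ comajNum σ :=
    sum_card_filter_le_le_sum (zero_notMem_AscSet σ) (mem_powersetCard.1 hS).1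
  rw [pow_mul_inv_pow_of_le hq hle]

lemma ascStarredComajSum_eq_sum_subsetWeight (hq : q ≠ 0) (n k : ℕ) :
    ascStarredComajSum q n k =
      ∑ σ : Perm (Fin n), q ^ comajNum σ * subsetWeight q⁻¹ #(AscSet σ) k :=
  sum_congr rfl fun σ _ => sum_starSets_AscSet hq σ k

lemma ascStarredComajSum_succ (hq : q ≠ 0) (n k : ℕ) :
    ascStarredComajSum q (n + 1) k = ∑ τ : Perm (Fin n), q ^ comajNum τ *
      (qnum q (#(AscSet τ) + 1) * subsetWeight q⁻¹ #(AscSet τ) k + q ^ (#(AscSet τ) + 1) *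
        qnum q (n - #(AscSet τ)) * subsetWeight q⁻¹ (#(AscSet τ) + 1) k) := by
  rw [ascStarredComajSum_eq_sum_subsetWeight hq, sum_perm_succ_eq_sum_insertMax]
  exact sum_congr rfl fun τ _ => sum_insertMax_pow_comajNum_mul τ q (subsetWeight q⁻¹ · k) rfl

lemma ascStarredComajSum_succ_zero (hq : q ≠ 0) (n : ℕ) :
    ascStarredComajSum q (n + 1) 0 = qnum q (n + 1) * ascStarredComajSum q n 0 := by
  rw [ascStarredComajSum_succ hq, ascStarredComajSum_eq_sum_subsetWeight hq, mul_sum]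
  refine sum_congr rfl fun τ _ => ?_
  have split : qnum q (n + 1) = qnum q (#(AscSet τ) + 1) +
      q ^ (#(AscSet τ) + 1) * qnum q (n - #(AscSet τ)) := by
    rw [← qnum_add]
    have := card_AscSet_le τ
    congr 1
    omega
  rw [subsetWeight_zero_right, subsetWeight_zero_right, split]
  ring

lemma ascStarredComajSum_succ_succ (hq0 : q ≠ 0) (hq1 : q ≠ 1) (n k : ℕ) :
    ascStarredComajSum q (n + 1) (k + 1) =
      qnum q (n - k) * (ascStarredComajSum q n (k + 1) + ascStarredComajSum q n k) := by
  simp only [ascStarredComajSum_succ hq0, ascStarredComajSum_eq_sum_subsetWeight hq0,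
    ← sum_add_distrib, mul_sum]
  refine sum_congr rfl fun τ _ => ?_
  have := card_AscSet_le τ
  rw [subsetWeight_inv_recurrence hq0 hq1 (by omega : #(AscSet τ) ≤ n)]
  ring

theorem ascStarredComajSum_eq_qfact_mul_qStirling (hq0 : q ≠ 0) (hq1 : q ≠ 1) {n : ℕ}
    (hn : 1 ≤ n) (k : ℕ) :
    ascStarredComajSum q n k = qfact q (n - k) * qStirling q n (n - k) := by
  induction n, hn using Nat.le_induction generalizing k with
  | base =>
    rcases k with _ | k
    · simp [ascStarredComajSum_succ_zero hq0, ascStarredComajSum_zero_zero, qfact, qnum,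
        qStirling_self]
    · simp [ascStarredComajSum_succ_succ hq0 hq1, qfact, qStirling]
  | succ n _ ih =>
    rcases k with _ | k
    · rw [ascStarredComajSum_succ_zero hq0, ih, Nat.sub_zero, Nat.sub_zero, qStirling_self,
        qStirling_self, qfact_succ]
      ring
    · rw [ascStarredComajSum_succ_succ hq0 hq1, ih, ih, qfact_mul_qStirling_succ_succ]

end StarredSumField

theorem statement13_general {R : Type*} [CommRing R] (q : R) (n k : ℕ) (hn : 1 ≤ n) :
    ∑ σ : Equiv.Perm (Fin n), ∑ S ∈ starSets (AscSet σ) k,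
        q ^ (comajNum σ - ∑ i ∈ S, (AscSet σ ∩ Finset.Icc i (n - 1)).card) =
      qfact q (n - k) * qStirling q n (n - k) := by
  let ι := algebraMap (Polynomial ℤ) (FractionRing (Polynomial ℤ))
  have hι : Function.Injective ι := IsFractionRing.injective _ _
  have generic : ascStarredComajSum (Polynomial.X : Polynomial ℤ) n k =
      qfact Polynomial.X (n - k) * qStirling Polynomial.X n (n - k) := by
    refine hι ?_
    rw [map_ascStarredComajSum, map_mul, map_qfact, map_qStirling]
    refine ascStarredComajSum_eq_qfact_mul_qStirling ?_ ?_ hn k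
    · exact (map_ne_zero_iff ι hι).2 Polynomial.X_ne_zero
    · rw [← map_one ι, hι.ne_iff]
      simpa using Polynomial.X_ne_C (1 : ℤ)
  have := congrArg (Polynomial.eval₂RingHom (Int.castRingHom R) q) generic
  rwa [map_ascStarredComajSum, map_mul, map_qfact, map_qStirling, Polynomial.coe_eval₂RingHom,
    Polynomial.eval₂_X] at this

/-- For all n ≥ 1, 0 ≤ k ≤ n−1 and q in a commutative ring,
Σ_{(σ,S)∈𝔖^<_{n,k}} q^{comaj(σ) − Σ_{i∈S} |Asc(σ)∩{i,…,n−1}|} = [n−k]_q! · S_{n,n−k}(q). -/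
theorem statement13 {R : Type*} [CommRing R] (q : R) (n k : ℕ) (hn : 1 ≤ n) (hk : k ≤ n - 1) :
    ∑ σ : Equiv.Perm (Fin n), ∑ S ∈ starSets (AscSet σ) k,
        q ^ (comajNum σ - ∑ i ∈ S, (AscSet σ ∩ Finset.Icc i (n - 1)).card) =
      qfact q (n - k) * qStirling q n (n - k) :=
  statement13_general q n k hn
end
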